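/- Assume Υ(k) ≥ 20 (so that each p^(i) is non-zero). Then for any distinct i, j ∈ [k], the normalised approximate centres satisfy ‖p^(i)/‖p^(i)‖ − p^(j)/‖p^(j)‖‖² ≥ 2 − 20/Υ(k). -/

import Mathlib

open Finset
open scoped RealInnerProductSpace

/-- The volume of a vertex set: the sum of the degrees of its vertices. -/
noncomputable def gVol {V : Type*} (deg : V → ℝ) (S : Finset V) : ℝ := ∑ u ∈ S, deg u

/-- The total edge weight between two vertex sets. -/
noncomputable def gCut {V : Type*} (w : V → V → ℝ) (A B : Finset V) : ℝ :=
  ∑ u ∈ A, ∑ v ∈ B, w u v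

/-- The conductance of a vertex set. -/
noncomputable def gCond {V : Type*} [Fintype V] [DecidableEq V]
    (w : V → V → ℝ) (deg : V → ℝ) (S : Finset V) : ℝ :=
  gCut w S Sᶜ / min (gVol deg S) (gVol deg Sᶜ)

/-- `S : Fin k → Finset V` is a partition of `V` into `k` non-empty sets. -/
def IsPartition {V : Type*} [Fintype V] {k : ℕ} (S : Fin k → Finset V) : Prop :=
  (∀ i, (S i).Nonempty) ∧ (∀ i j, i ≠ j → Disjoint (S i) (S j)) ∧ ∀ v, ∃ i, v ∈ S i

/-- The vector `D^{1/2} χ_S`. -/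
noncomputable def indVec {n : ℕ} (deg : Fin n → ℝ) (S : Finset (Fin n)) :
    EuclideanSpace ℝ (Fin n) :=
  WithLp.toLp 2 (fun v => if v ∈ S then Real.sqrt (deg v) else 0)

/-- The normalised indicator vector `D^{1/2} χ_S / ‖D^{1/2} χ_S‖` of a cluster `S`. -/
noncomputable def gbarVec {n : ℕ} (deg : Fin n → ℝ) (S : Finset (Fin n)) :
    EuclideanSpace ℝ (Fin n) :=
  ‖indVec deg S‖⁻¹ • indVec deg S

/-!
Expand each normalised cluster indicator `ḡᵢ` in the eigenbasis `f`. Its Rayleigh quotient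
`ḡᵢᵀ N ḡᵢ = ∑ₜ λₜ ⟨fₜ, ḡᵢ⟩²` equals `w(Sᵢ, V ∖ Sᵢ) / vol(Sᵢ) ≤ ρ(k)`, so the mass of `ḡᵢ` on the
eigenvectors beyond the first `k` is at most `ρ(k) / λ_{k+1} = ε := 1/Υ(k)`. Up to the positive
factor `1/√vol(Sᵢ)`, which normalisation removes, `p⁽ⁱ⁾` is the vector of the first `k`
coordinates of `ḡᵢ`: its squared norm is at least `1 - ε`, and since `ḡᵢ ⊥ ḡⱼ` its inner product
with the head of `ḡⱼ` is minus that of the tails, at most `ε` by Cauchy–Schwarz. Hence the cosine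
of the angle between `p⁽ⁱ⁾` and `p⁽ʲ⁾` is at most `ε / (1 - ε) ≤ 10 ε`.
-/

open NormedSpace
open scoped Matrix

theorem gCut_comm {V : Type*} {w : V → V → ℝ} (hsymm : ∀ u v, w u v = w v u) (A B : Finset V) :
    gCut w A B = gCut w B A := by
  rw [gCut, gCut, sum_comm]
  exact sum_congr rfl fun _ _ => sum_congr rfl fun _ _ => hsymm _ _

section NormalizedLaplacian

variable {V : Type*} [Fintype V] [DecidableEq V] {w : V → V → ℝ} {deg : V → ℝ} {N : Matrix V V ℝ}

theorem normLap_dotProduct_mulVec (hsymm : ∀ u v, w u v = w v u)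
    (hdeg : ∀ u, deg u = ∑ v, w u v) (hdegpos : ∀ u, 0 < deg u)
    (hN : ∀ u v, N u v =
      (if u = v then (1 : ℝ) else 0) - w u v / (Real.sqrt (deg u) * Real.sqrt (deg v)))
    (x : V → ℝ) :
    x ⬝ᵥ N *ᵥ x =
      (∑ u, ∑ v, w u v * (x u / Real.sqrt (deg u) - x v / Real.sqrt (deg v)) ^ 2) / 2 := by
  set y : V → ℝ := fun u => x u / Real.sqrt (deg u)
  have hx : ∀ u, x u = Real.sqrt (deg u) * y u := fun u => by
    simp only [y]; field_simp [(Real.sqrt_pos.2 (hdegpos u)).ne']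
  have hsq : ∀ u, x u * x u = ∑ v, w u v * y u ^ 2 := fun u => by
    rw [← sum_mul, ← hdeg, hx, mul_mul_mul_comm, Real.mul_self_sqrt (hdegpos u).le, sq]
  have hsq' : ∑ u, x u * x u = ∑ u, ∑ v, w u v * y v ^ 2 := by
    rw [sum_comm]
    refine sum_congr rfl fun u _ => ?_
    rw [hsq]
    exact sum_congr rfl fun v _ => by rw [hsymm]
  have hlhs : x ⬝ᵥ N *ᵥ x = ∑ u, x u * x u - ∑ u, ∑ v, w u v * (y u * y v) := by
    simp only [dotProduct, Matrix.mulVec, hN, sub_mul, ite_mul, one_mul, zero_mul, mul_sub,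
      sum_sub_distrib, sum_ite_eq, mem_univ, if_true, mul_sum]
    refine congrArg _ (sum_congr rfl fun u _ => sum_congr rfl fun v _ => ?_)
    rw [hx u, hx v]
    field_simp [(Real.sqrt_pos.2 (hdegpos u)).ne', (Real.sqrt_pos.2 (hdegpos v)).ne']
  have hrhs : ∀ u v, w u v * (y u - y v) ^ 2
      = w u v * y u ^ 2 + w u v * y v ^ 2 - 2 * (w u v * (y u * y v)) := fun u v => by ring
  change _ = (∑ u, ∑ v, w u v * (y u - y v) ^ 2) / 2
  simp only [hrhs, sum_sub_distrib, sum_add_distrib, ← mul_sum]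
  rw [hlhs, ← sum_congr rfl fun u _ => hsq u, hsq']
  ring

theorem normLap_dotProduct_mulVec_nonneg (hsymm : ∀ u v, w u v = w v u)
    (hnonneg : ∀ u v, 0 ≤ w u v) (hdeg : ∀ u, deg u = ∑ v, w u v) (hdegpos : ∀ u, 0 < deg u)
    (hN : ∀ u v, N u v =
      (if u = v then (1 : ℝ) else 0) - w u v / (Real.sqrt (deg u) * Real.sqrt (deg v)))
    (x : V → ℝ) : 0 ≤ x ⬝ᵥ N *ᵥ x := by
  rw [normLap_dotProduct_mulVec hsymm hdeg hdegpos hN]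
  exact div_nonneg (sum_nonneg fun u _ => sum_nonneg fun v _ =>
    mul_nonneg (hnonneg u v) (sq_nonneg _)) zero_le_two

theorem normLap_dotProduct_mulVec_indicator (hsymm : ∀ u v, w u v = w v u)
    (hdeg : ∀ u, deg u = ∑ v, w u v) (hdegpos : ∀ u, 0 < deg u)
    (hN : ∀ u v, N u v =
      (if u = v then (1 : ℝ) else 0) - w u v / (Real.sqrt (deg u) * Real.sqrt (deg v)))
    (S : Finset V) :
    (fun u => if u ∈ S then Real.sqrt (deg u) else 0) ⬝ᵥ
      N *ᵥ (fun u => if u ∈ S then Real.sqrt (deg u) else 0) = gCut w S Sᶜ := by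
  rw [normLap_dotProduct_mulVec hsymm hdeg hdegpos hN]
  have hind : ∀ u, (if u ∈ S then Real.sqrt (deg u) else 0) / Real.sqrt (deg u)
      = if u ∈ S then 1 else 0 := fun u => by
    split_ifs <;> simp [(Real.sqrt_pos.2 (hdegpos u)).ne']
  have hterm : ∀ u v, w u v * ((if u ∈ S then (1 : ℝ) else 0) - if v ∈ S then 1 else 0) ^ 2
      = (if u ∈ S then if v ∈ Sᶜ then w u v else 0 else 0)
        + if u ∈ Sᶜ then if v ∈ S then w u v else 0 else 0 := fun u v => by
    by_cases hu : u ∈ S <;> by_cases hv : v ∈ S <;> simp [hu, hv]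
  simp only [hind, hterm, sum_add_distrib, sum_ite_irrel, sum_const_zero, sum_ite_mem,
    univ_inter]
  rw [← gCut, ← gCut, gCut_comm hsymm Sᶜ]
  ring

end NormalizedLaplacian

section ClusterIndicator

variable {n : ℕ} {deg : Fin n → ℝ}

theorem norm_indVec_sq (hdeg : ∀ u, 0 ≤ deg u) (S : Finset (Fin n)) :
    ‖indVec deg S‖ ^ 2 = gVol deg S := by
  simp only [EuclideanSpace.norm_sq_eq, indVec, Real.norm_eq_abs, sq_abs, ite_pow,
    Real.sq_sqrt (hdeg _), zero_pow two_ne_zero, sum_ite_mem, univ_inter, gVol]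

theorem inner_indVec_eq_zero {S T : Finset (Fin n)} (hST : Disjoint S T) :
    ⟪indVec deg S, indVec deg T⟫ = 0 := by
  simp only [indVec, PiLp.inner_apply]
  refine sum_eq_zero fun u _ => ?_
  by_cases hu : u ∈ S
  · simp [hu, disjoint_left.1 hST hu]
  · simp [hu]

theorem norm_gbarVec (hdeg : ∀ u, 0 ≤ deg u) {S : Finset (Fin n)} (hS : 0 < gVol deg S) :
    ‖gbarVec deg S‖ = 1 := by
  have hne : indVec deg S ≠ 0 := by
    rw [← norm_ne_zero_iff, ← sq_pos_iff, norm_indVec_sq hdeg]; exact hS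
  exact norm_smul_inv_norm hne

theorem inner_gbarVec_eq_zero {S T : Finset (Fin n)} (hST : Disjoint S T) :
    ⟪gbarVec deg S, gbarVec deg T⟫ = 0 := by
  rw [gbarVec, gbarVec, real_inner_smul_left, real_inner_smul_right, inner_indVec_eq_zero hST,
    mul_zero, mul_zero]

end ClusterIndicator

theorem normLap_dotProduct_mulVec_gbarVec {n : ℕ} {w : Fin n → Fin n → ℝ} {deg : Fin n → ℝ}
    {N : Matrix (Fin n) (Fin n) ℝ} (hsymm : ∀ u v, w u v = w v u)
    (hdeg : ∀ u, deg u = ∑ v, w u v) (hdegpos : ∀ u, 0 < deg u)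
    (hN : ∀ u v, N u v =
      (if u = v then (1 : ℝ) else 0) - w u v / (Real.sqrt (deg u) * Real.sqrt (deg v)))
    (S : Finset (Fin n)) :
    (gbarVec deg S).ofLp ⬝ᵥ N *ᵥ (gbarVec deg S).ofLp = gCut w S Sᶜ / gVol deg S := by
  rw [gbarVec, WithLp.ofLp_smul, Matrix.mulVec_smul, dotProduct_smul, smul_dotProduct,
    smul_eq_mul, smul_eq_mul, ← mul_assoc, ← sq, inv_pow, norm_indVec_sq fun u => (hdegpos u).le]
  rw [show (indVec deg S).ofLp = fun u => if u ∈ S then Real.sqrt (deg u) else 0 from rfl,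
    normLap_dotProduct_mulVec_indicator hsymm hdeg hdegpos hN, inv_mul_eq_div]

theorem div_gVol_le_gCond {V : Type*} [Fintype V] [DecidableEq V] {w : V → V → ℝ}
    {deg : V → ℝ} (hnonneg : ∀ u v, 0 ≤ w u v) {S : Finset V} (hS : 0 < gVol deg S)
    (hSc : 0 < gVol deg Sᶜ) : gCut w S Sᶜ / gVol deg S ≤ gCond w deg S :=
  div_le_div_of_nonneg_left (sum_nonneg fun u _ => sum_nonneg fun v _ => hnonneg u v)
    (lt_min hS hSc) (min_le_left _ _)

namespace IsPartition

variable {V : Type*} [Fintype V] {k : ℕ} {S : Fin k → Finset V} {deg : V → ℝ}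

theorem gVol_pos (hS : IsPartition S) (hdeg : ∀ u, 0 < deg u) (i : Fin k) :
    0 < gVol deg (S i) :=
  sum_pos (fun u _ => hdeg u) (hS.1 i)

theorem gVol_compl_pos [DecidableEq V] (hS : IsPartition S) (hdeg : ∀ u, 0 < deg u)
    {i j : Fin k} (hij : i ≠ j) : 0 < gVol deg (S i)ᶜ :=
  (hS.gVol_pos hdeg j).trans_le <| sum_le_sum_of_subset_of_nonneg
    (fun _ hv => mem_compl.2 fun hv' => disjoint_left.1 (hS.2.1 i j hij) hv' hv)
    fun u _ _ => (hdeg u).le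

end IsPartition

theorem sum_filter_not_lt_sq_le_div {ι : Type*} [Fintype ι] [LinearOrder ι] {μ : ι → ℝ}
    (hμ : Monotone μ) (hμ0 : ∀ t, 0 ≤ μ t) {t₀ : ι} (ht₀ : 0 < μ t₀) (a : ι → ℝ) :
    ∑ t ∈ univ.filter (fun t => ¬ t < t₀), a t ^ 2 ≤ (∑ t, μ t * a t ^ 2) / μ t₀ := by
  rw [le_div_iff₀ ht₀, sum_mul]
  calc ∑ t ∈ univ.filter (fun t => ¬ t < t₀), a t ^ 2 * μ t₀
      ≤ ∑ t ∈ univ.filter (fun t => ¬ t < t₀), μ t * a t ^ 2 :=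
        sum_le_sum fun t ht => by
          rw [mul_comm]
          exact mul_le_mul_of_nonneg_right (hμ (not_lt.1 (mem_filter.1 ht).2)) (sq_nonneg _)
    _ ≤ ∑ t, μ t * a t ^ 2 :=
        sum_le_sum_of_subset_of_nonneg (filter_subset _ _)
          fun t _ _ => mul_nonneg (hμ0 t) (sq_nonneg _)

section Spectral

variable {ι : Type*} [Fintype ι] {A : Matrix ι ι ℝ} {μ : ι → ℝ}

theorem dotProduct_mulVec_eq_sum_mul_inner_sq (b : OrthonormalBasis ι ℝ (EuclideanSpace ℝ ι))
    (hA : ∀ t, A *ᵥ b t = μ t • b t) (x : EuclideanSpace ℝ ι) :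
    x.ofLp ⬝ᵥ A *ᵥ x.ofLp = ∑ t, μ t * ⟪b t, x⟫ ^ 2 := by
  nth_rewrite 2 [← b.sum_repr' x]
  simp only [WithLp.ofLp_sum, WithLp.ofLp_smul, Matrix.mulVec_sum, Matrix.mulVec_smul, hA,
    dotProduct_sum, dotProduct_smul, smul_eq_mul]
  refine sum_congr rfl fun t _ => ?_
  rw [EuclideanSpace.inner_eq_star_dotProduct, star_trivial]
  ring

theorem nonneg_of_mulVec_eq_smul (hA : ∀ x, 0 ≤ x ⬝ᵥ A *ᵥ x) {v : ι → ℝ} (hv : v ≠ 0)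
    {c : ℝ} (h : A *ᵥ v = c • v) : 0 ≤ c := by
  have hvv : 0 < v ⬝ᵥ v := by simpa using Matrix.dotProduct_self_star_pos_iff.2 hv
  have := hA v
  rw [h, dotProduct_smul, smul_eq_mul] at this
  exact nonneg_of_mul_nonneg_left this hvv

end Spectral

theorem sum_filter_mul_le_of_sum_mul_eq_zero {ι : Type*} [Fintype ι] (P : ι → Prop)
    [DecidablePred P] {a b : ι → ℝ} {ε : ℝ} (hab : ∑ t, a t * b t = 0)
    (ha : ∑ t ∈ univ.filter (fun t => ¬ P t), a t ^ 2 ≤ ε)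
    (hb : ∑ t ∈ univ.filter (fun t => ¬ P t), b t ^ 2 ≤ ε) :
    ∑ t ∈ univ.filter P, a t * b t ≤ ε := by
  have hε : 0 ≤ ε := (sum_nonneg fun t _ => sq_nonneg (a t)).trans ha
  have hcs : (∑ t ∈ univ.filter (fun t => ¬ P t), a t * b t) ^ 2 ≤ ε ^ 2 :=
    (sum_mul_sq_le_sq_mul_sq _ a b).trans <| (mul_le_mul ha hb
      (sum_nonneg fun t _ => sq_nonneg (b t)) hε).trans_eq (sq ε).symm
  have := (abs_le_of_sq_le_sq' hcs hε).1
  rw [← sum_filter_add_sum_filter_not univ P] at hab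
  linarith

theorem Fin.sum_castLE_eq_sum_filter {M : Type*} [AddCommMonoid M] {k n : ℕ} (h : k ≤ n)
    (F : Fin n → M) :
    ∑ j : Fin k, F (Fin.castLE h j) = ∑ t ∈ univ.filter (fun t : Fin n => (t : ℕ) < k), F t := by
  refine (sum_map univ (Fin.castLEEmb h) F).symm.trans (congrArg (Finset.sum · F) ?_)
  ext t
  simp only [mem_map, mem_univ, true_and, mem_filter]
  exact ⟨by rintro ⟨j, rfl⟩; exact j.2, fun ht => ⟨⟨t, ht⟩, rfl⟩⟩

theorem two_sub_le_norm_normalize_sub_sq {E : Type*} [NormedAddCommGroup E]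
    [InnerProductSpace ℝ E] {x y : E} {ε : ℝ} (hε0 : 0 ≤ ε) (hε1 : ε < 1)
    (hx : 1 - ε ≤ ‖x‖ ^ 2) (hy : 1 - ε ≤ ‖y‖ ^ 2) (hxy : ⟪x, y⟫ ≤ ε) :
    2 - 2 * (ε / (1 - ε)) ≤ ‖normalize x - normalize y‖ ^ 2 := by
  have hx0 : 0 < ‖x‖ := by nlinarith [norm_nonneg x]
  have hy0 : 0 < ‖y‖ := by nlinarith [norm_nonneg y]
  have hxy0 : 1 - ε ≤ ‖x‖ * ‖y‖ := by
    refine abs_le_of_sq_le_sq' ?_ (by positivity) |>.2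
    nlinarith
  have hcos : ⟪x, y⟫ / (‖x‖ * ‖y‖) ≤ ε / (1 - ε) := by
    rcases le_total ⟪x, y⟫ 0 with h | h
    · exact (div_nonpos_of_nonpos_of_nonneg h (by positivity)).trans
        (div_nonneg hε0 (sub_pos.2 hε1).le)
    · exact div_le_div₀ hε0 hxy (sub_pos.2 hε1) hxy0
  rw [norm_sub_sq_real, norm_normalize_eq_one_iff.2 (norm_pos_iff.1 hx0),
    norm_normalize_eq_one_iff.2 (norm_pos_iff.1 hy0)]
  have hinner : ⟪normalize x, normalize y⟫ = ⟪x, y⟫ / (‖x‖ * ‖y‖) := by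
    rw [NormedSpace.normalize, NormedSpace.normalize, real_inner_smul_left,
      real_inner_smul_right]
    field_simp
  linarith

theorem sum_filter_not_lt_inner_gbarVec_sq_le {n : ℕ} {w : Fin n → Fin n → ℝ}
    {deg : Fin n → ℝ} {N : Matrix (Fin n) (Fin n) ℝ} (hsymm : ∀ u v, w u v = w v u)
    (hnonneg : ∀ u v, 0 ≤ w u v) (hdeg : ∀ u, deg u = ∑ v, w u v) (hdegpos : ∀ u, 0 < deg u)
    (hN : ∀ u v, N u v =
      (if u = v then (1 : ℝ) else 0) - w u v / (Real.sqrt (deg u) * Real.sqrt (deg v)))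
    {lam : Fin n → ℝ} (hlam : Monotone lam)
    (b : OrthonormalBasis (Fin n) ℝ (EuclideanSpace ℝ (Fin n)))
    (heig : ∀ t, N *ᵥ b t = lam t • b t) {t₀ : Fin n} (ht₀ : 0 < lam t₀) {S : Finset (Fin n)}
    (hS : 0 < gVol deg S) (hSc : 0 < gVol deg Sᶜ) :
    ∑ t ∈ univ.filter (fun t => ¬ t < t₀), ⟪b t, gbarVec deg S⟫ ^ 2 ≤ gCond w deg S / lam t₀ := by
  have hlam0 : ∀ t, 0 ≤ lam t := fun t =>
    nonneg_of_mulVec_eq_smul (normLap_dotProduct_mulVec_nonneg hsymm hnonneg hdeg hdegpos hN)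
      (by simpa using b.orthonormal.ne_zero t) (heig t)
  calc _ ≤ (∑ t, lam t * ⟪b t, gbarVec deg S⟫ ^ 2) / lam t₀ :=
        sum_filter_not_lt_sq_le_div hlam hlam0 ht₀ _
    _ = gCut w S Sᶜ / gVol deg S / lam t₀ := by
        rw [← dotProduct_mulVec_eq_sum_mul_inner_sq b heig,
          normLap_dotProduct_mulVec_gbarVec hsymm hdeg hdegpos hN]
    _ ≤ gCond w deg S / lam t₀ := by
        gcongr
        exact div_gVol_le_gCond hnonneg hS hSc

theorem inv_div_one_sub_inv_le {U : ℝ} (hU : 10 / 9 ≤ U) : U⁻¹ / (1 - U⁻¹) ≤ 10 / U := by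
  have hU0 : 0 < U := by linarith
  rw [div_le_div_iff₀ (sub_pos.2 (inv_lt_one_of_one_lt₀ (by linarith))) hU0]
  field_simp
  linarith

section HeadCoefficients

variable {E : Type*} [NormedAddCommGroup E] [InnerProductSpace ℝ E] {n k : ℕ}

/-- The coordinates, in `b 0, …, b (k-1)`, of the orthogonal projection of `x` onto their span. -/
noncomputable def headCoeffs (b : OrthonormalBasis (Fin n) ℝ E) (h : k ≤ n) (x : E) :
    EuclideanSpace ℝ (Fin k) :=
  WithLp.toLp 2 fun j => ⟪b (Fin.castLE h j), x⟫

theorem inner_headCoeffs (b : OrthonormalBasis (Fin n) ℝ E) (h : k ≤ n) (x y : E) :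
    ⟪headCoeffs b h x, headCoeffs b h y⟫
      = ∑ t ∈ univ.filter (fun t : Fin n => (t : ℕ) < k), ⟪b t, x⟫ * ⟪b t, y⟫ := by
  rw [← Fin.sum_castLE_eq_sum_filter h]
  simp [headCoeffs, PiLp.inner_apply, mul_comm]

theorem two_sub_le_norm_normalize_headCoeffs_sub_sq (b : OrthonormalBasis (Fin n) ℝ E)
    (h : k ≤ n) {x y : E} (hx : ‖x‖ = 1) (hy : ‖y‖ = 1) (hxy : ⟪x, y⟫ = 0) {ε : ℝ} (hε : ε < 1)
    (hxε : ∑ t ∈ univ.filter (fun t : Fin n => ¬ (t : ℕ) < k), ⟪b t, x⟫ ^ 2 ≤ ε)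
    (hyε : ∑ t ∈ univ.filter (fun t : Fin n => ¬ (t : ℕ) < k), ⟪b t, y⟫ ^ 2 ≤ ε) :
    2 - 2 * (ε / (1 - ε)) ≤
      ‖normalize (headCoeffs b h x) - normalize (headCoeffs b h y)‖ ^ 2 := by
  have hparseval : ∀ u v : E, ∑ t, ⟪b t, u⟫ * ⟪b t, v⟫ = ⟪u, v⟫ := fun u v => by
    simpa only [real_inner_comm u] using b.sum_inner_mul_inner u v
  have hhead : ∀ z : E, ‖z‖ = 1 →
      ∑ t ∈ univ.filter (fun t : Fin n => ¬ (t : ℕ) < k), ⟪b t, z⟫ ^ 2 ≤ ε →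
      1 - ε ≤ ‖headCoeffs b h z‖ ^ 2 := fun z hz hzε => by
    have := hparseval z z
    rw [real_inner_self_eq_norm_sq, hz,
      ← sum_filter_add_sum_filter_not univ (fun t : Fin n => (t : ℕ) < k)] at this
    rw [← real_inner_self_eq_norm_sq, inner_headCoeffs]
    simp only [← sq] at this ⊢
    linarith
  refine two_sub_le_norm_normalize_sub_sq ((sum_nonneg fun t _ => sq_nonneg _).trans hxε) hε
    (hhead x hx hxε) (hhead y hy hyε) ?_
  rw [inner_headCoeffs]
  exact sum_filter_mul_le_of_sum_mul_eq_zero _ ((hparseval x y).trans hxy) hxε hyε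

end HeadCoefficients

theorem normalised_centre_distance_general
    {n k : ℕ} (hkn : k < n)
    (w : Fin n → Fin n → ℝ)
    (hsymm : ∀ u v, w u v = w v u)
    (hnonneg : ∀ u v, 0 ≤ w u v)
    (deg : Fin n → ℝ) (hdeg : ∀ u, deg u = ∑ v, w u v)
    (hdegpos : ∀ u, 0 < deg u)
    -- the normalised Laplacian `N = I - D^{-1/2} A D^{-1/2}`
    (N : Matrix (Fin n) (Fin n) ℝ)
    (hN : ∀ u v, N u v =
      (if u = v then (1 : ℝ) else 0) - w u v / (Real.sqrt (deg u) * Real.sqrt (deg v)))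
    -- its eigenvalues `lam 0 ≤ … ≤ lam (n-1)` with orthonormal eigenvectors `f`
    (lam : Fin n → ℝ) (hlam : Monotone lam)
    (f : Fin n → EuclideanSpace ℝ (Fin n))
    (hf : Orthonormal ℝ f)
    (heig : ∀ i, N.mulVec (f i) = lam i • (f i))
    -- `S` is a partition attaining the `k`-way expansion `ρ(k)`
    (S : Fin k → Finset (Fin n)) (hS : IsPartition S)
    (rho : ℝ)
    (hrho : rho = ⨆ i, gCond w deg (S i))
    (hlampos : 0 < lam ⟨k, hkn⟩)
    -- `Υ(k) = λ_{k+1} / ρ(k)`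
    (Upsilon : ℝ) (hU : Upsilon = lam ⟨k, hkn⟩ / rho)
    -- the normalised indicator vectors of the clusters
    (gbar : Fin k → EuclideanSpace ℝ (Fin n))
    (hgbar : ∀ i, gbar i = gbarVec deg (S i))
    -- the approximate cluster centres `p^(i)(j) = ⟨f_j, ḡ_i⟩ / √vol(S_i)`
    (p : Fin k → EuclideanSpace ℝ (Fin k))
    (hp : ∀ i j, p i j = ⟪f (Fin.castLE hkn.le j), gbar i⟫ / Real.sqrt (gVol deg (S i)))
    (hU20 : 20 ≤ Upsilon) :
    ∀ i j : Fin k, i ≠ j →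
      2 - 20 / Upsilon ≤ ‖‖p i‖⁻¹ • p i - ‖p j‖⁻¹ • p j‖ ^ 2 := by
  intro i j hij
  let b : OrthonormalBasis (Fin n) ℝ (EuclideanSpace ℝ (Fin n)) := OrthonormalBasis.mk hf
    (hf.linearIndependent.span_eq_top_of_card_eq_finrank' (by simp)).ge
  have hb : ⇑b = f := OrthonormalBasis.coe_mk _ _
  have htail : ∀ a c : Fin k, a ≠ c →
      ∑ t ∈ univ.filter (fun t : Fin n => ¬ (t : ℕ) < k), ⟪b t, gbar a⟫ ^ 2 ≤ Upsilon⁻¹ := by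
    intro a c hac
    rw [hgbar, hU, inv_div]
    refine (sum_filter_not_lt_inner_gbarVec_sq_le hsymm hnonneg hdeg hdegpos hN hlam b
      (hb ▸ heig) hlampos (hS.gVol_pos hdegpos a) (hS.gVol_compl_pos hdegpos hac)).trans ?_
    gcongr
    exact hrho ▸ le_ciSup (f := fun i => gCond w deg (S i)) (Set.finite_range _).bddAbove a
  have hunit : ∀ a, ‖gbar a‖ = 1 := fun a => by
    rw [hgbar]; exact norm_gbarVec (fun u => (hdegpos u).le) (hS.gVol_pos hdegpos a)
  have hcentre : ∀ a, p a = (Real.sqrt (gVol deg (S a)))⁻¹ • headCoeffs b hkn.le (gbar a) :=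
    fun a => by ext j; simp [hp, headCoeffs, hb, div_eq_inv_mul]
  change _ ≤ ‖normalize (p i) - normalize (p j)‖ ^ 2
  rw [hcentre, hcentre, normalize_smul_of_pos (by simp [hS.gVol_pos hdegpos]),
    normalize_smul_of_pos (by simp [hS.gVol_pos hdegpos])]
  calc 2 - 20 / Upsilon ≤ 2 - 2 * (Upsilon⁻¹ / (1 - Upsilon⁻¹)) := by
        linarith [inv_div_one_sub_inv_le (show 10 / 9 ≤ Upsilon by linarith),
          show 20 / Upsilon = 2 * (10 / Upsilon) by ring]
    _ ≤ _ := two_sub_le_norm_normalize_headCoeffs_sub_sq b hkn.le (hunit i) (hunit j)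
        (by rw [hgbar, hgbar]; exact inner_gbarVec_eq_zero (hS.2.1 i j hij))
        (inv_lt_one_of_one_lt₀ (by linarith)) (htail i j hij) (htail j i hij.symm)

/-- Normalised approximate centres are far apart (Lemma 4.7). -/
theorem normalised_centre_distance
    {n k : ℕ} (hk : 0 < k) (hkn : k < n)
    (w : Fin n → Fin n → ℝ)
    (hsymm : ∀ u v, w u v = w v u)
    (hnonneg : ∀ u v, 0 ≤ w u v)
    (deg : Fin n → ℝ) (hdeg : ∀ u, deg u = ∑ v, w u v)
    (hdegpos : ∀ u, 0 < deg u)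
    -- the normalised Laplacian `N = I - D^{-1/2} A D^{-1/2}`
    (N : Matrix (Fin n) (Fin n) ℝ)
    (hN : ∀ u v, N u v =
      (if u = v then (1 : ℝ) else 0) - w u v / (Real.sqrt (deg u) * Real.sqrt (deg v)))
    -- its eigenvalues `lam 0 ≤ … ≤ lam (n-1)` with orthonormal eigenvectors `f`
    (lam : Fin n → ℝ) (hlam : Monotone lam)
    (f : Fin n → EuclideanSpace ℝ (Fin n))
    (hf : Orthonormal ℝ f)
    (heig : ∀ i, N.mulVec (f i) = lam i • (f i))
    -- `S` is a partition attaining the `k`-way expansion `ρ(k)`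
    (S : Fin k → Finset (Fin n)) (hS : IsPartition S)
    (rho : ℝ)
    (hrho : rho = ⨆ i, gCond w deg (S i))
    (hopt : ∀ T : Fin k → Finset (Fin n), IsPartition T → rho ≤ ⨆ i, gCond w deg (T i))
    (hrhopos : 0 < rho)
    (hlampos : 0 < lam ⟨k, hkn⟩)
    -- `Υ(k) = λ_{k+1} / ρ(k)`
    (Upsilon : ℝ) (hU : Upsilon = lam ⟨k, hkn⟩ / rho)
    -- the normalised indicator vectors of the clusters
    (gbar : Fin k → EuclideanSpace ℝ (Fin n))
    (hgbar : ∀ i, gbar i = gbarVec deg (S i))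
    -- the approximate cluster centres `p^(i)(j) = ⟨f_j, ḡ_i⟩ / √vol(S_i)`
    (p : Fin k → EuclideanSpace ℝ (Fin k))
    (hp : ∀ i j, p i j = ⟪f (Fin.castLE hkn.le j), gbar i⟫ / Real.sqrt (gVol deg (S i)))
    (hU20 : 20 ≤ Upsilon) :
    ∀ i j : Fin k, i ≠ j →
      2 - 20 / Upsilon ≤ ‖‖p i‖⁻¹ • p i - ‖p j‖⁻¹ • p j‖ ^ 2 :=
  normalised_centre_distance_general hkn w hsymm hnonneg deg hdeg hdegpos N hN lam hlam f hf heig S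
    hS rho hrho hlampos Upsilon hU gbar hgbar p hp hU20
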